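/- Relative equilibrium criterion: z_e is a relative equilibrium of a scaling symmetry (i.e. X_H(z_e) = ξ_M(z_e) for some ξ) if and only if d(H - ξJ)(z_e) + (cξ)θ(z_e) = 0, where J is the conformal momentum map with parameter c. -/

import Mathlib

/-- Relative equilibrium criterion for scaling symmetries, in the flat model of
an exact symplectic manifold with nondegenerate `ω = -dθ`,
`ω x u v = fderiv ℝ θ x v u - fderiv ℝ θ x u v`.  Let `X_H` be the Hamiltonian
vector field of `H` (`i_{X_H} ω = dH`) and let `ξM` be the infinitesimal
generator of `ξ ∈ ℝ` for a conformally symplectic `ℝ⁺`-action with conformal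
momentum map `J`: `i_{ξM} ω + (cξ)θ = d(ξJ)`.  Then `z_e` is a relative
equilibrium (i.e. `X_H(z_e) = ξM(z_e)`) if and only if
`d(H - ξJ)(z_e) + (cξ) θ(z_e) = 0`. -/
theorem relative_equilibrium_iff_augmented_hamiltonian
    {E : Type*} [NormedAddCommGroup E] [NormedSpace ℝ E]
    (θ : E → E →L[ℝ] ℝ) (H J : E → ℝ) (c ξ : ℝ) (XH ξM : E → E)
    (hθ : ContDiff ℝ (⊤ : ℕ∞) θ) (hH : Differentiable ℝ H) (hJ : Differentiable ℝ J)
    (hnd : ∀ x u, (∀ v, fderiv ℝ θ x v u - fderiv ℝ θ x u v = 0) → u = 0)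
    (hXH : ∀ x v, fderiv ℝ θ x v (XH x) - fderiv ℝ θ x (XH x) v = fderiv ℝ H x v)
    (hmom : ∀ x v,
      (fderiv ℝ θ x v (ξM x) - fderiv ℝ θ x (ξM x) v) + (c * ξ) * θ x v
      = fderiv ℝ (fun y => ξ * J y) x v)
    (ze : E) :
    XH ze = ξM ze ↔
      ∀ v, fderiv ℝ (fun y => H y - ξ * J y) ze v + (c * ξ) * θ ze v = 0 := by
  have hJ' : Differentiable ℝ (fun y => ξ * J y) := hJ.const_mul ξ
  have hsub : ∀ v, fderiv ℝ (fun y => H y - ξ * J y) ze v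
      = fderiv ℝ H ze v - fderiv ℝ (fun y => ξ * J y) ze v := by
    intro v
    rw [fderiv_fun_sub (hH ze) (hJ' ze)]
    rfl
  have key : ∀ v, fderiv ℝ (fun y => H y - ξ * J y) ze v + (c * ξ) * θ ze v
      = fderiv ℝ θ ze v (XH ze - ξM ze) - fderiv ℝ θ ze (XH ze - ξM ze) v := by
    intro v
    have h1 := hXH ze v
    have h2 := hmom ze v
    rw [hsub v, ← h1, ← h2]
    have e1 : fderiv ℝ θ ze v (XH ze - ξM ze)
        = fderiv ℝ θ ze v (XH ze) - fderiv ℝ θ ze v (ξM ze) := by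
      simp
    have e2 : fderiv ℝ θ ze (XH ze - ξM ze) v
        = fderiv ℝ θ ze (XH ze) v - fderiv ℝ θ ze (ξM ze) v := by
      simp
    rw [e1, e2]; ring
  constructor
  · intro h v
    rw [key v, h]
    simp
  · intro h
    have : XH ze - ξM ze = 0 := by
      apply hnd ze
      intro v
      rw [← key v]
      exact h v
    linear_combination (norm := abel) this
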